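/- arXiv:2102.11980 — 5 statements merged into one kernel-verified Lean document; each statement's English description precedes it below -/
import Mathlib

section
/- Given z̄ ∈ ℝ^d, μ̄ ∈ ℝ^m, β̄ ≥ 0 with β̄ + ‖μ̄‖_∞ ≤ ρ, the augmented Lagrangian cut is valid: for all z ∈ ℝ^d, R_ρ(z) ≥ P(z̄, μ̄, β̄) + ⟨μ̄, Bz − Bz̄⟩ − β̄‖Bz − Bz̄‖₁, where P(z̄, μ̄, β̄) = min_{x∈X}(cᵀx + ⟨μ̄, Ax + Bz̄⟩ + β̄‖Ax + Bz̄‖₁) and R_ρ(z) = min_{x∈X}(cᵀx + ρ‖Ax + Bz‖₁). -/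
open Matrix

noncomputable def l1 {m : ℕ} (v : Fin m → ℝ) : ℝ := ∑ i, |v i|
noncomputable def linf {m : ℕ} (v : Fin m → ℝ) : ℝ := ⨆ i, |v i|

lemma l1_nonneg {m : ℕ} (v : Fin m → ℝ) : 0 ≤ l1 v :=
  Finset.sum_nonneg fun _ _ => abs_nonneg _

lemma l1_sub_le {m : ℕ} (a b : Fin m → ℝ) : l1 (a - b) ≤ l1 a + l1 b := by
  rw [l1, l1, l1, ← Finset.sum_add_distrib]
  exact Finset.sum_le_sum fun i _ => abs_sub (a i) (b i)

lemma holder {m : ℕ} (μ w : Fin m → ℝ) : μ ⬝ᵥ w ≤ linf μ * l1 w := by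
  have : μ ⬝ᵥ w = ∑ i, μ i * w i := rfl
  rw [this, l1, Finset.mul_sum]
  refine Finset.sum_le_sum fun i _ => ?_
  calc μ i * w i ≤ |μ i * w i| := le_abs_self _
    _ = |μ i| * |w i| := abs_mul _ _
    _ ≤ linf μ * |w i| := by
        have h : |μ i| ≤ linf μ :=
          le_ciSup (Set.finite_range fun j => |μ j|).bddAbove i
        exact mul_le_mul_of_nonneg_right h (abs_nonneg _)

/-- Validity of the augmented Lagrangian cut:
`R_ρ(z) ≥ P(z̄, μ̄, β̄) + ⟨μ̄, Bz − Bz̄⟩ − β̄‖Bz − Bz̄‖₁` for all `z`. -/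
theorem stmt_7 (n m d : ℕ) (X : Set (Fin n → ℝ)) (hXne : X.Nonempty) (hXcpt : IsCompact X)
    (A : Matrix (Fin m) (Fin n) ℝ) (B : Matrix (Fin m) (Fin d) ℝ)
    (c : Fin n → ℝ) (ρ : ℝ) (hρ : 0 < ρ)
    (zbar : Fin d → ℝ) (μbar : Fin m → ℝ) (βbar : ℝ)
    (hβ : 0 ≤ βbar) (hΛ : βbar + linf μbar ≤ ρ)
    (Pval : ℝ)
    (hP : IsLeast
      ((fun x => c ⬝ᵥ x + μbar ⬝ᵥ (A *ᵥ x + B *ᵥ zbar) + βbar * l1 (A *ᵥ x + B *ᵥ zbar)) '' X)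
      Pval)
    (R : (Fin d → ℝ) → ℝ)
    (hR : ∀ z : Fin d → ℝ,
      IsLeast ((fun x => c ⬝ᵥ x + ρ * l1 (A *ᵥ x + B *ᵥ z)) '' X) (R z)) :
    ∀ z : Fin d → ℝ,
      R z ≥ Pval + μbar ⬝ᵥ (B *ᵥ z - B *ᵥ zbar) - βbar * l1 (B *ᵥ z - B *ᵥ zbar) := by
  intro z
  obtain ⟨⟨x, hx, hxval⟩, _⟩ := hR z
  set w := A *ᵥ x + B *ᵥ z with hw
  set δ := (B *ᵥ z - B *ᵥ zbar : Fin m → ℝ) with hδ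
  have hwd : A *ᵥ x + B *ᵥ zbar = w - δ := by
    funext i; simp [hw, hδ]; ring
  have hPle : Pval ≤ c ⬝ᵥ x + μbar ⬝ᵥ (w - δ) + βbar * l1 (w - δ) := by
    simpa only [hwd] using hP.2 ⟨x, hx, rfl⟩
  have hdot : μbar ⬝ᵥ (w - δ) = μbar ⬝ᵥ w - μbar ⬝ᵥ δ := dotProduct_sub _ _ _
  have h1 : μbar ⬝ᵥ w ≤ linf μbar * l1 w := holder _ _
  have h2 : βbar * l1 (w - δ) ≤ βbar * (l1 w + l1 δ) :=
    mul_le_mul_of_nonneg_left (l1_sub_le _ _) hβ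
  have h3 : (βbar + linf μbar) * l1 w ≤ ρ * l1 w :=
    mul_le_mul_of_nonneg_right hΛ (l1_nonneg _)
  have hRz : R z = c ⬝ᵥ x + ρ * l1 w := hxval.symm
  rw [hRz]
  nlinarith [l1_nonneg w, l1_nonneg δ]
end

section
/- Let (x̄, z̄) ∈ X × Z be an ε-minimizer of L(x, z, λ, ρ) = cᵀx + gᵀz + ⟨λ, Ax + Bz⟩ + ρ‖Ax + Bz‖₁ over X × Z, and suppose ρ ≥ ‖λ‖_∞. Then cᵀx̄ + gᵀz̄ + (ρ − ‖λ‖_∞)‖Ax̄ + Bz̄‖₁ ≤ p* + ε, and in particular cᵀx̄ + gᵀz̄ ≤ p* + ε. -/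
open Matrix

/-- Lemma on ε-minimizers of the sharp augmented Lagrangian: if `ρ ≥ ‖λ‖_∞` and
`(x̄, z̄)` is an ε-minimizer of `L(·,·,λ,ρ)` over `X × Z`, then
`cᵀx̄ + gᵀz̄ + (ρ − ‖λ‖_∞)‖Ax̄ + Bz̄‖₁ ≤ p* + ε`, and in particular
`cᵀx̄ + gᵀz̄ ≤ p* + ε`. -/
theorem stmt_10 (n m d : ℕ)
    (X : Set (Fin n → ℝ)) (hXne : X.Nonempty) (hXcpt : IsCompact X)
    (Z : Set (Fin d → ℝ)) (hZne : Z.Nonempty) (hZcpt : IsCompact Z)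
    (A : Matrix (Fin m) (Fin n) ℝ) (B : Matrix (Fin m) (Fin d) ℝ)
    (c : Fin n → ℝ) (g : Fin d → ℝ)
    (lam : Fin m → ℝ) (ρ ε : ℝ) (hρ : ρ ≥ linf lam) (hε : 0 ≤ ε)
    (L : (Fin n → ℝ) → (Fin d → ℝ) → ℝ)
    (hL : ∀ x z, L x z = c ⬝ᵥ x + g ⬝ᵥ z + lam ⬝ᵥ (A *ᵥ x + B *ᵥ z)
      + ρ * l1 (A *ᵥ x + B *ᵥ z))
    (xbar : Fin n → ℝ) (zbar : Fin d → ℝ) (hx : xbar ∈ X) (hz : zbar ∈ Z)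
    (hεmin : ∀ x ∈ X, ∀ z ∈ Z, L xbar zbar ≤ L x z + ε)
    (pstar : ℝ)
    (hp : IsLeast {v : ℝ | ∃ x ∈ X, ∃ z ∈ Z,
      A *ᵥ x + B *ᵥ z = 0 ∧ v = c ⬝ᵥ x + g ⬝ᵥ z} pstar) :
    c ⬝ᵥ xbar + g ⬝ᵥ zbar + (ρ - linf lam) * l1 (A *ᵥ xbar + B *ᵥ zbar) ≤ pstar + ε
    ∧ c ⬝ᵥ xbar + g ⬝ᵥ zbar ≤ pstar + ε := by
  obtain ⟨⟨xs, hxs, zs, hzs, hfeas, hps⟩, _⟩ := hp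
  set v := A *ᵥ xbar + B *ᵥ zbar with hv
  have hl1nonneg : 0 ≤ l1 v := Finset.sum_nonneg fun i _ => abs_nonneg _
  have hlinf0 : 0 ≤ linf lam := by
    rcases Nat.eq_zero_or_pos m with h0 | hm
    · subst h0
      simp [linf, Real.iSup_of_isEmpty]
    · have i : Fin m := ⟨0, hm⟩
      have := le_ciSup (f := fun j => |lam j|) (Set.Finite.bddAbove (Set.finite_range _)) i
      exact le_trans (abs_nonneg (lam i)) this
  have hbound : -(linf lam * l1 v) ≤ lam ⬝ᵥ v := by
    have : -(lam ⬝ᵥ v) ≤ linf lam * l1 v := by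
      have h1 : -(lam ⬝ᵥ v) = ∑ i, -(lam i * v i) := by
        simp [dotProduct, Finset.sum_neg_distrib]
      rw [h1, l1, Finset.mul_sum]
      apply Finset.sum_le_sum
      intro i _
      have h2 : -(lam i * v i) ≤ |lam i| * |v i| := by
        calc -(lam i * v i) ≤ |lam i * v i| := neg_le_abs _
          _ = |lam i| * |v i| := abs_mul _ _
      refine h2.trans (mul_le_mul_of_nonneg_right ?_ (abs_nonneg _))
      exact le_ciSup (f := fun j => |lam j|) (Set.Finite.bddAbove (Set.finite_range _)) i
    linarith
  have hLstar : L xs zs = pstar := by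
    rw [hL, hfeas, hps]
    simp [l1]
  have hkey : L xbar zbar ≤ pstar + ε := by
    rw [← hLstar]; exact hεmin xs hxs zs hzs
  rw [hL] at hkey
  have h1 : c ⬝ᵥ xbar + g ⬝ᵥ zbar + (ρ - linf lam) * l1 v ≤ pstar + ε := by nlinarith
  refine ⟨h1, ?_⟩
  nlinarith [mul_nonneg (sub_nonneg.mpr hρ) hl1nonneg]
end

section
/- Suppose ρ ≥ ‖λ‖_∞ and (λ, ρ − 1) supports exact penalization, i.e., p* ≤ cᵀx + gᵀz + ⟨λ, Ax + Bz⟩ + (ρ − 1)‖Ax + Bz‖₁ for all (x, z) ∈ X × Z. If (x̄, z̄) is an ε-minimizer of L(x, z, λ, ρ) over X × Z, then (x̄, z̄) is an ε-solution of the original problem: x̄ ∈ X, z̄ ∈ Z, cᵀx̄ + gᵀz̄ ≤ p* + ε, and ‖Ax̄ + Bz̄‖₁ ≤ ε. -/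
open Matrix

/-- If `ρ ≥ ‖λ‖_∞`, `(λ, ρ − 1)` supports exact penalization, and `(x̄, z̄)` is an
ε-minimizer of the sharp augmented Lagrangian over `X × Z`, then `(x̄, z̄)` is an
ε-solution: `x̄ ∈ X`, `z̄ ∈ Z`, `cᵀx̄ + gᵀz̄ ≤ p* + ε`, and `‖Ax̄ + Bz̄‖₁ ≤ ε`. -/
theorem stmt_11 (n m d : ℕ)
    (X : Set (Fin n → ℝ)) (hXne : X.Nonempty) (hXcpt : IsCompact X)
    (Z : Set (Fin d → ℝ)) (hZne : Z.Nonempty) (hZcpt : IsCompact Z)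
    (A : Matrix (Fin m) (Fin n) ℝ) (B : Matrix (Fin m) (Fin d) ℝ)
    (c : Fin n → ℝ) (g : Fin d → ℝ)
    (lam : Fin m → ℝ) (ρ ε : ℝ) (hρ : ρ ≥ linf lam) (hε : 0 ≤ ε)
    (pstar : ℝ)
    (hp : IsLeast {v : ℝ | ∃ x ∈ X, ∃ z ∈ Z,
      A *ᵥ x + B *ᵥ z = 0 ∧ v = c ⬝ᵥ x + g ⬝ᵥ z} pstar)
    (hexact : ∀ x ∈ X, ∀ z ∈ Z,
      pstar ≤ c ⬝ᵥ x + g ⬝ᵥ z + lam ⬝ᵥ (A *ᵥ x + B *ᵥ z)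
        + (ρ - 1) * l1 (A *ᵥ x + B *ᵥ z))
    (L : (Fin n → ℝ) → (Fin d → ℝ) → ℝ)
    (hL : ∀ x z, L x z = c ⬝ᵥ x + g ⬝ᵥ z + lam ⬝ᵥ (A *ᵥ x + B *ᵥ z)
      + ρ * l1 (A *ᵥ x + B *ᵥ z))
    (xbar : Fin n → ℝ) (zbar : Fin d → ℝ) (hx : xbar ∈ X) (hz : zbar ∈ Z)
    (hεmin : ∀ x ∈ X, ∀ z ∈ Z, L xbar zbar ≤ L x z + ε) :
    xbar ∈ X ∧ zbar ∈ Z ∧ c ⬝ᵥ xbar + g ⬝ᵥ zbar ≤ pstar + ε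
    ∧ l1 (A *ᵥ xbar + B *ᵥ zbar) ≤ ε := by
  obtain ⟨⟨xs, hxs, zs, hzs, hfeas, hval⟩, hlb⟩ := hp
  set v := A *ᵥ xbar + B *ᵥ zbar with hv
  have hl1nn : 0 ≤ l1 v := Finset.sum_nonneg fun i _ => abs_nonneg _
  -- L at (xs, zs) equals pstar
  have hLs : L xs zs = pstar := by
    rw [hL, hfeas, hval]
    simp [l1]
  have hmin : L xbar zbar ≤ pstar + ε := by
    have := hεmin xs hxs zs hzs
    rwa [hLs] at this
  -- from exact penalization
  have hex := hexact xbar hx zbar hz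
  rw [hL] at hmin
  have hl1 : l1 v ≤ ε := by nlinarith [hex, hmin]
  -- bound |lam ⬝ᵥ v| ≤ linf lam * l1 v
  have hdot : - (linf lam * l1 v) ≤ lam ⬝ᵥ v := by
    have hbdd : BddAbove (Set.range fun i => |lam i|) :=
      (Set.finite_range _).bddAbove
    have hlinf_nn : 0 ≤ linf lam := by
      rcases Nat.eq_zero_or_pos m with hm | hm
      · subst hm; simp [linf, Real.iSup_of_isEmpty]
      · have i0 : Fin m := ⟨0, hm⟩
        exact le_trans (abs_nonneg _) (le_ciSup hbdd i0)
    have h1 : ∀ i, |lam i * v i| ≤ linf lam * |v i| := by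
      intro i
      rw [abs_mul]
      exact mul_le_mul_of_nonneg_right (le_ciSup hbdd i) (abs_nonneg _)
    have h2 : |lam ⬝ᵥ v| ≤ linf lam * l1 v := by
      calc |lam ⬝ᵥ v| ≤ ∑ i, |lam i * v i| := Finset.abs_sum_le_sum_abs _ _
        _ ≤ ∑ i, linf lam * |v i| := Finset.sum_le_sum fun i _ => h1 i
        _ = linf lam * l1 v := by rw [l1, Finset.mul_sum]
    linarith [neg_abs_le (lam ⬝ᵥ v)]
  have hρl1 : linf lam * l1 v ≤ ρ * l1 v := mul_le_mul_of_nonneg_right hρ hl1nn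
  refine ⟨hx, hz, ?_, hl1⟩
  linarith
end

section
/- Let ε > 0, λ ∈ ℝ^m, and set ρ = (‖c‖₁ D_∞(X) + ‖g‖₁ D_∞(Z))/ε + ‖λ‖_∞ + 1, where D_∞(S) = sup{‖u − v‖_∞ : u, v ∈ S}. If (x̄, z̄) is an ε-minimizer of L(x, z, λ, ρ) over X × Z, then cᵀx̄ + gᵀz̄ ≤ p* + ε and ‖Ax̄ + Bz̄‖₁ ≤ ε. -/
open Matrix

lemma linf_nonneg {m : ℕ} (v : Fin m → ℝ) : 0 ≤ linf v :=
  Real.iSup_nonneg fun i => abs_nonneg _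

lemma abs_le_linf {m : ℕ} (v : Fin m → ℝ) (i : Fin m) : |v i| ≤ linf v := by
  unfold linf
  exact le_ciSup (Set.Finite.bddAbove (Set.finite_range fun j => |v j|)) i

lemma abs_dot_le_linf_l1 {m : ℕ} (v w : Fin m → ℝ) : |v ⬝ᵥ w| ≤ linf v * l1 w := by
  rw [dotProduct, l1, Finset.mul_sum]
  refine (Finset.abs_sum_le_sum_abs _ _).trans (Finset.sum_le_sum fun i _ => ?_)
  rw [abs_mul]
  exact mul_le_mul_of_nonneg_right (abs_le_linf v i) (abs_nonneg _)

lemma abs_dot_le_l1_linf {m : ℕ} (v w : Fin m → ℝ) : |v ⬝ᵥ w| ≤ l1 v * linf w := by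
  rw [dotProduct, l1, Finset.sum_mul]
  refine (Finset.abs_sum_le_sum_abs _ _).trans (Finset.sum_le_sum fun i _ => ?_)
  rw [abs_mul]
  exact mul_le_mul_of_nonneg_left (abs_le_linf w i) (abs_nonneg _)

/-- With the penalty `ρ = (‖c‖₁ D_∞(X) + ‖g‖₁ D_∞(Z))/ε + ‖λ‖_∞ + 1`, any
ε-minimizer `(x̄, z̄)` of the sharp augmented Lagrangian over `X × Z` satisfies
`cᵀx̄ + gᵀz̄ ≤ p* + ε` and `‖Ax̄ + Bz̄‖₁ ≤ ε`.  Here `DX` (resp. `DZ`) is an upper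
bound on the ℓ∞-diameter of `X` (resp. `Z`). -/
theorem stmt_12 (n m d : ℕ)
    (X : Set (Fin n → ℝ)) (hXne : X.Nonempty) (hXcpt : IsCompact X)
    (Z : Set (Fin d → ℝ)) (hZne : Z.Nonempty) (hZcpt : IsCompact Z)
    (A : Matrix (Fin m) (Fin n) ℝ) (B : Matrix (Fin m) (Fin d) ℝ)
    (c : Fin n → ℝ) (g : Fin d → ℝ)
    (lam : Fin m → ℝ) (ε : ℝ) (hε : 0 < ε)
    (DX DZ : ℝ)
    (hDX : ∀ u ∈ X, ∀ v ∈ X, linf (u - v) ≤ DX)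
    (hDZ : ∀ u ∈ Z, ∀ v ∈ Z, linf (u - v) ≤ DZ)
    (ρ : ℝ) (hρ : ρ = (l1 c * DX + l1 g * DZ) / ε + linf lam + 1)
    (pstar : ℝ)
    (hp : IsLeast {v : ℝ | ∃ x ∈ X, ∃ z ∈ Z,
      A *ᵥ x + B *ᵥ z = 0 ∧ v = c ⬝ᵥ x + g ⬝ᵥ z} pstar)
    (L : (Fin n → ℝ) → (Fin d → ℝ) → ℝ)
    (hL : ∀ x z, L x z = c ⬝ᵥ x + g ⬝ᵥ z + lam ⬝ᵥ (A *ᵥ x + B *ᵥ z)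
      + ρ * l1 (A *ᵥ x + B *ᵥ z))
    (xbar : Fin n → ℝ) (zbar : Fin d → ℝ) (hx : xbar ∈ X) (hz : zbar ∈ Z)
    (hεmin : ∀ x ∈ X, ∀ z ∈ Z, L xbar zbar ≤ L x z + ε) :
    c ⬝ᵥ xbar + g ⬝ᵥ zbar ≤ pstar + ε ∧ l1 (A *ᵥ xbar + B *ᵥ zbar) ≤ ε := by
  obtain ⟨⟨xs, hxs, zs, hzs, hfeas, hps⟩, _⟩ := hp
  set r := A *ᵥ xbar + B *ᵥ zbar with hr
  set v := c ⬝ᵥ xbar + g ⬝ᵥ zbar with hv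
  set M := l1 c * DX + l1 g * DZ with hM
  -- nonnegativity facts
  have hDX0 : 0 ≤ DX := le_trans (linf_nonneg (xbar - xbar)) (hDX _ hx _ hx)
  have hDZ0 : 0 ≤ DZ := le_trans (linf_nonneg (zbar - zbar)) (hDZ _ hz _ hz)
  have hM0 : 0 ≤ M := by
    have := mul_nonneg (l1_nonneg c) hDX0
    have := mul_nonneg (l1_nonneg g) hDZ0
    simp only [hM]; linarith
  have hl1r : 0 ≤ l1 r := l1_nonneg r
  -- L at optimal point equals pstar
  have hl10 : l1 (0 : Fin m → ℝ) = 0 := by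
    simp [l1]
  have hLs : L xs zs = pstar := by
    rw [hL, hfeas, hl10, hps]; simp
  have hmain : L xbar zbar ≤ pstar + ε := hLs ▸ hεmin xs hxs zs hzs
  rw [hL] at hmain
  -- bound lam ⬝ᵥ r from below
  have hlam : -(linf lam * l1 r) ≤ lam ⬝ᵥ r :=
    neg_le_of_abs_le (abs_dot_le_linf_l1 lam r)
  have hkey : v + (ρ - linf lam) * l1 r ≤ pstar + ε := by
    have := hmain
    simp only [← hr, ← hv] at this
    nlinarith [this, hlam]
  have hρlam : ρ - linf lam = M / ε + 1 := by rw [hρ]; ring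
  have hfac : 0 ≤ ρ - linf lam := by
    rw [hρlam]; positivity
  constructor
  · nlinarith [mul_nonneg hfac hl1r]
  · -- pstar - v ≤ M
    have hcx : |c ⬝ᵥ xs - c ⬝ᵥ xbar| ≤ l1 c * DX := by
      have h1 : c ⬝ᵥ xs - c ⬝ᵥ xbar = c ⬝ᵥ (xs - xbar) := by
        simp [dotProduct_sub]
      rw [h1]
      exact (abs_dot_le_l1_linf c _).trans
        (mul_le_mul_of_nonneg_left (hDX _ hxs _ hx) (l1_nonneg c))
    have hgz : |g ⬝ᵥ zs - g ⬝ᵥ zbar| ≤ l1 g * DZ := by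
      have h1 : g ⬝ᵥ zs - g ⬝ᵥ zbar = g ⬝ᵥ (zs - zbar) := by
        simp [dotProduct_sub]
      rw [h1]
      exact (abs_dot_le_l1_linf g _).trans
        (mul_le_mul_of_nonneg_left (hDZ _ hzs _ hz) (l1_nonneg g))
    have hpv : pstar - v ≤ M := by
      have h1 := abs_le.mp hcx
      have h2 := abs_le.mp hgz
      rw [hps, hv, hM]; linarith [h1.2, h2.2]
    -- (M/ε + 1) * l1 r ≤ M + ε
    have h3 : (M / ε + 1) * l1 r ≤ M + ε := by
      have := hkey
      rw [hρlam] at this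
      linarith
    have hMε : 0 < M + ε := by linarith
    have h4 : (M / ε + 1) = (M + ε) / ε := by field_simp
    rw [h4, div_mul_eq_mul_div, div_le_iff₀ hε] at h3
    have := mul_le_mul_of_nonneg_left (le_of_lt hε) (le_of_lt hMε)
    nlinarith [h3]
end

section
/- Suppose ρ̲ − 1 supports exact penalization (p* ≤ cᵀx + gᵀz + (ρ̲ − 1)‖Ax + Bz‖₁ for all (x,z) ∈ X × Z), and z^K ∈ Z satisfies gᵀz^K + R_ρ̲(z^K) ≤ p* + ε, where R_ρ̲(z) = min_{x∈X}(cᵀx + ρ̲‖Ax + Bz‖₁). Let x(z^K) attain R_ρ̲(z^K). Then ‖A x(z^K) + B z^K‖₁ ≤ ε and cᵀx(z^K) + gᵀz^K ≤ p* + ε, i.e., (x(z^K), z^K) is an ε-solution. -/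
open Matrix

/-- If `ρ̲ − 1` supports exact penalization and `z^K ∈ Z` satisfies
`gᵀz^K + R_ρ̲(z^K) ≤ p* + ε`, then with `x(z^K)` attaining `R_ρ̲(z^K)`, the pair
`(x(z^K), z^K)` is an ε-solution: `‖Ax(z^K) + Bz^K‖₁ ≤ ε` and
`cᵀx(z^K) + gᵀz^K ≤ p* + ε`. -/
theorem stmt_18 (n m d : ℕ)
    (X : Set (Fin n → ℝ)) (hXne : X.Nonempty) (hXcpt : IsCompact X)
    (Z : Set (Fin d → ℝ)) (hZne : Z.Nonempty) (hZcpt : IsCompact Z)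
    (A : Matrix (Fin m) (Fin n) ℝ) (B : Matrix (Fin m) (Fin d) ℝ)
    (c : Fin n → ℝ) (g : Fin d → ℝ)
    (ρlow ε : ℝ) (hρlow : 1 < ρlow) (hε : 0 ≤ ε)
    (pstar : ℝ)
    (hp : IsLeast {v : ℝ | ∃ x ∈ X, ∃ z ∈ Z,
      A *ᵥ x + B *ᵥ z = 0 ∧ v = c ⬝ᵥ x + g ⬝ᵥ z} pstar)
    (hexact : ∀ x ∈ X, ∀ z ∈ Z,
      pstar ≤ c ⬝ᵥ x + g ⬝ᵥ z + (ρlow - 1) * l1 (A *ᵥ x + B *ᵥ z))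
    (zK : Fin d → ℝ) (hzK : zK ∈ Z)
    (xK : Fin n → ℝ) (hxK : xK ∈ X)
    (hattain : ∀ x ∈ X, c ⬝ᵥ xK + ρlow * l1 (A *ᵥ xK + B *ᵥ zK)
      ≤ c ⬝ᵥ x + ρlow * l1 (A *ᵥ x + B *ᵥ zK))
    (hRK : g ⬝ᵥ zK + (c ⬝ᵥ xK + ρlow * l1 (A *ᵥ xK + B *ᵥ zK)) ≤ pstar + ε) :
    l1 (A *ᵥ xK + B *ᵥ zK) ≤ ε ∧ c ⬝ᵥ xK + g ⬝ᵥ zK ≤ pstar + ε := by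
  set v := l1 (A *ᵥ xK + B *ᵥ zK) with hv
  have hv0 : 0 ≤ v := Finset.sum_nonneg fun i _ => abs_nonneg _
  have h1 := hexact xK hxK zK hzK
  have hvε : v ≤ ε := by nlinarith
  constructor
  · exact hvε
  · nlinarith
end
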